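/- Fix an odd positive integer k. The family of functions n ↦ a_{k,ℓ}(n), indexed by odd integers ℓ > k and regarded as elements of the ℂ-vector space of functions from the positive integers to ℂ, is linearly independent over ℂ: every finite nontrivial ℂ-linear combination of distinct members of the family is a nonzero function. -/

import Mathlib

/-!
At a prime `p` we have `σ_s(p) = 1 + p^s`, so `a_{k,ℓ}(p)` is the value at `p` of an explicit
polynomial `aFunPoly k ℓ` of degree `3ℓ+2k`. These polynomials have pairwise distinct degrees,
hence are linearly independent, and a polynomial vanishing at every prime is zero, so a linear
relation among the `a_{k,ℓ}` restricted to the primes is already a relation among the polynomials.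
-/

/-- `σ_s(n) = ∑_{d ∣ n} d^s`, as an integer. -/
def sigmaZ (s n : ℕ) : ℤ := ∑ d ∈ n.divisors, (d : ℤ) ^ s

/-- `a_{k,ℓ}(n) = (n^{3ℓ}+n^{2ℓ}+n^ℓ+1)·σ_{3k}(n) − (n^{3k}+n^{2k}+n^k+1)·σ_{3ℓ}(n)`. -/
def aFun (k l n : ℕ) : ℤ :=
  ((n : ℤ) ^ (3 * l) + (n : ℤ) ^ (2 * l) + (n : ℤ) ^ l + 1) * sigmaZ (3 * k) n
    - ((n : ℤ) ^ (3 * k) + (n : ℤ) ^ (2 * k) + (n : ℤ) ^ k + 1) * sigmaZ (3 * l) n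

open Polynomial

namespace Polynomial

variable {R ι : Type*} [CommRing R] [IsDomain R]

theorem linearIndependent_of_injective_natDegree {f : ι → R[X]} (hf : ∀ i, f i ≠ 0)
    (hdeg : Function.Injective fun i => (f i).natDegree) : LinearIndependent R f := by
  classical
  rw [linearIndependent_iff']
  intro s
  induction s using Finset.induction_on_max_value (fun i => (f i).natDegree) with
  | empty => simp
  | insert a s ha hle ih =>
    intro g hsum i hi
    have hlt : ∀ j ∈ s, (f j).natDegree < (f a).natDegree := fun j hj =>
      (hle j hj).lt_of_ne fun h => ha (hdeg h ▸ hj)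
    have hga : g a = 0 := by
      have htop := congrArg (coeff · (f a).natDegree) hsum
      simp only [Finset.sum_insert ha, coeff_add, finsetSum_coeff, coeff_smul, smul_eq_mul,
        coeff_zero] at htop
      rw [Finset.sum_eq_zero fun j hj => by rw [coeff_eq_zero_of_natDegree_lt (hlt j hj),
        mul_zero], add_zero, coeff_natDegree] at htop
      exact (mul_eq_zero.mp htop).resolve_right (leadingCoeff_ne_zero.mpr (hf a))
    rw [Finset.sum_insert ha, hga, zero_smul, zero_add] at hsum
    rcases Finset.mem_insert.mp hi with rfl | hi
    · exact hga
    · exact ih g hsum i hi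

theorem injective_pi_leval [Infinite ι] {v : ι → R} (hv : Function.Injective v) :
    Function.Injective (LinearMap.pi fun i => leval (v i)) := by
  rw [← LinearMap.ker_eq_bot, LinearMap.ker_eq_bot']
  intro P hP
  refine eq_zero_of_infinite_isRoot P ((Set.infinite_range_of_injective hv).mono ?_)
  rintro _ ⟨i, rfl⟩
  exact congrFun hP i

end Polynomial

theorem sigmaZ_prime (s : ℕ) {p : ℕ} (hp : p.Prime) : sigmaZ s p = 1 + (p : ℤ) ^ s := by
  rw [sigmaZ, hp.divisors, Finset.sum_pair hp.one_lt.ne]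
  simp

noncomputable def aFunPoly (k l : ℕ) : ℂ[X] :=
  X ^ (2 * l + 3 * k) + X ^ (l + 3 * k) + X ^ (2 * l) + X ^ l
    - X ^ (3 * l + 2 * k) - X ^ (3 * l + k) - X ^ (2 * k) - X ^ k

theorem aFun_prime (k l : ℕ) {p : ℕ} (hp : p.Prime) :
    (aFun k l p : ℂ) = (aFunPoly k l).eval (p : ℂ) := by
  simp only [aFun, sigmaZ_prime _ hp, aFunPoly, eval_add, eval_sub, eval_pow, eval_X]
  push_cast
  ring

theorem coeff_aFunPoly_of_lt {k l N : ℕ} (hkl : k ≤ l) (hN : 3 * l + 2 * k < N) :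
    (aFunPoly k l).coeff N = 0 := by
  simp only [aFunPoly, coeff_sub, coeff_add, coeff_X_pow]
  split_ifs <;> first | omega | ring

theorem coeff_aFunPoly_natDegree_ne_zero {k l : ℕ} (hkl : k < l) :
    (aFunPoly k l).coeff (3 * l + 2 * k) ≠ 0 := by
  simp only [aFunPoly, coeff_sub, coeff_add, coeff_X_pow]
  split_ifs <;> first | omega | norm_num

theorem natDegree_aFunPoly {k l : ℕ} (hkl : k < l) : (aFunPoly k l).natDegree = 3 * l + 2 * k :=
  natDegree_eq_of_le_of_coeff_ne_zero
    (natDegree_le_iff_coeff_eq_zero.mpr fun _ hN => coeff_aFunPoly_of_lt hkl.le hN)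
    (coeff_aFunPoly_natDegree_ne_zero hkl)

theorem linearIndependent_aFunPoly (k : ℕ) :
    LinearIndependent ℂ fun l : {l : ℕ // k < l} => aFunPoly k l := by
  refine linearIndependent_of_injective_natDegree (fun l h => ?_) fun l l' h => ?_
  · exact coeff_aFunPoly_natDegree_ne_zero l.2 (by rw [h, coeff_zero])
  · simp only [natDegree_aFunPoly l.2, natDegree_aFunPoly l'.2] at h
    exact Subtype.ext (by omega)

theorem linearIndependent_aFun (k : ℕ) :
    LinearIndependent ℂ fun l : {l : ℕ // k < l} => fun n : ℕ+ => (aFun k l n : ℂ) := by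
  refine .of_comp (LinearMap.funLeft ℂ ℂ ((↑) : Nat.Primes → ℕ+)) ?_
  have hprimes : LinearMap.funLeft ℂ ℂ ((↑) : Nat.Primes → ℕ+) ∘
      (fun l : {l : ℕ // k < l} => fun n : ℕ+ => (aFun k l n : ℂ)) =
      (LinearMap.pi fun p : Nat.Primes => leval (p : ℂ)) ∘
        fun l : {l : ℕ // k < l} => aFunPoly k l := by
    ext l p
    exact aFun_prime k l p.2
  rw [hprimes]
  exact (linearIndependent_aFunPoly k).map' _ (LinearMap.ker_eq_bot.mpr
    (injective_pi_leval (Nat.cast_injective.comp Subtype.val_injective)))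

theorem aFun_linearIndependent_general (k : ℕ) :
    LinearIndependent ℂ
      (fun l : {l : ℕ // Odd l ∧ k < l} => fun n : ℕ+ => (aFun k (l : ℕ) (n : ℕ) : ℂ)) :=
  (linearIndependent_aFun k).comp (Subtype.map id fun _ hl => hl.2)
    (Subtype.map_injective _ Function.injective_id)

/-- For fixed odd `k ≥ 1`, the coefficient functions `n ↦ a_{k,ℓ}(n)`, indexed by odd
`ℓ > k`, are linearly independent over `ℂ` as functions on the positive integers. -/
theorem aFun_linearIndependent (k : ℕ) (hk : Odd k) (hkpos : 0 < k) :
    LinearIndependent ℂ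
      (fun l : {l : ℕ // Odd l ∧ k < l} => fun n : ℕ+ => (aFun k (l : ℕ) (n : ℕ) : ℂ)) :=
  aFun_linearIndependent_general k
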